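/- Let G be a finite simple graph whose vertex set V is partitioned into two sets B and U such that every edge of G has one endpoint in B and one endpoint in U, and suppose U is nonempty. Then there exists a set S ⊆ B such that the subgraph of G induced on U ∪ S is a tree if and only if there exists a set D ⊆ B such that Break(G, D) is a tree. -/

import Mathlib

/-- The graph obtained from `G` by breaking every vertex in `S`:
each `s ∈ S` of degree `k` is replaced by `k` new degree-1 vertices,
one attached to each former neighbor of `s`. -/
def SimpleGraph.Break {V : Type*} (G : SimpleGraph V) (S : Set V) :
    SimpleGraph ((Sᶜ : Set V) ⊕ {p : V × V // p.1 ∈ S ∧ G.Adj p.1 p.2}) where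
  Adj x y :=
    match x, y with
    | Sum.inl x, Sum.inl y => G.Adj x y
    | Sum.inl x, Sum.inr p => p.1.2 = (x : V)
    | Sum.inr p, Sum.inl x => p.1.2 = (x : V)
    | Sum.inr p, Sum.inr q => p.1.2 = q.1.1 ∧ q.1.2 = p.1.1
  symm := by
    constructor
    rintro (x | p) (y | q) h
    · exact h.symm
    · exact h
    · exact h
    · exact ⟨h.2, h.1⟩
  loopless := by
    constructor
    rintro (x | p) h
    · exact G.irrefl h
    · exact G.ne_of_adj p.2.2 h.1.symm

/-!
If no two vertices of `D` are adjacent, every pair `(s, w)` of `Break G D` is a leaf whose only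
neighbour is the unbroken vertex `w`, so `Break G D` is `G.induce Dᶜ` with leaves hung on it.
Hanging leaves on a graph changes neither its connectivity nor its acyclicity (a cycle cannot
pass through a leaf). With `B` independent and `U = Bᶜ`, the sets `S ⊆ B` and `D ⊆ B` then
correspond via `D = B \ S`, because `U ∪ S = (B \ S)ᶜ`.
-/

namespace SimpleGraph

section Leaves

variable {W : Type*} {H : SimpleGraph W}

lemma Walk.IsCycle.not_subsingleton_neighborSet {u v : W} {c : H.Walk u u} (hc : c.IsCycle)
    (hv : v ∈ c.support) : ¬(H.neighborSet v).Subsingleton := fun hsub => by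
  obtain ⟨x, y, hxy, hN⟩ := Set.ncard_eq_two.mp (hc.ncard_neighborSet_toSubgraph_eq_two hv)
  have hx : x ∈ c.toSubgraph.neighborSet v := hN ▸ Set.mem_insert x {y}
  have hy : y ∈ c.toSubgraph.neighborSet v := hN ▸ Set.mem_insert_of_mem x rfl
  exact hxy (hsub (c.toSubgraph.neighborSet_subset v hx) (c.toSubgraph.neighborSet_subset v hy))

lemma isTree_induce_iff_of_neighborSet_eq_singleton {s : Set W}
    (hleaf : ∀ v ∉ s, ∃ w ∈ s, H.neighborSet v = {w}) : (H.induce s).IsTree ↔ H.IsTree := by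
  have hreach : ∀ v, ∃ w ∈ s, H.Reachable v w := fun v => by
    by_cases hv : v ∈ s
    · exact ⟨v, hv, .rfl⟩
    · obtain ⟨w, hw, hN⟩ := hleaf v hv
      exact ⟨w, hw, Adj.reachable (hN ▸ rfl : w ∈ H.neighborSet v)⟩
  constructor
  · rintro ⟨hconn, hacyc⟩
    refine ⟨(connected_iff _).mpr ⟨fun v v' => ?_, ?_⟩, fun u c hc => ?_⟩
    · obtain ⟨w, hw, hvw⟩ := hreach v
      obtain ⟨w', hw', hvw'⟩ := hreach v'
      exact hvw.trans ((hconn.preconnected ⟨w, hw⟩ ⟨w', hw'⟩).map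
        (Embedding.induce s).toHom |>.trans hvw'.symm)
    · exact hconn.nonempty.map Subtype.val
    · have hsupp : ∀ v ∈ c.support, v ∈ s := fun v hv => by
        by_contra hvs
        obtain ⟨w, -, hN⟩ := hleaf v hvs
        exact hc.not_subsingleton_neighborSet hv (hN ▸ Set.subsingleton_singleton)
      refine hacyc (c.induce s hsupp) ((Walk.isCycle_map_iff_of_injective
        (f := (Embedding.induce s).toHom) (Embedding.induce (G := H) s).injective).mp ?_)
      simpa using hc
  · rintro ⟨hconn, hacyc⟩
    obtain ⟨v⟩ := hconn.nonempty
    obtain ⟨w, hw, -⟩ := hreach v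
    refine ⟨(connected_iff _).mpr ⟨?_, ⟨⟨w, hw⟩⟩⟩, hacyc.induce s⟩
    refine hconn.preconnected.induce_of_degree_eq_one fun v hv => ?_
    obtain ⟨w, -, hN⟩ := hleaf v hv
    exact hN ▸ Set.subsingleton_singleton

end Leaves

section Break

variable {V : Type*} (G : SimpleGraph V) (D : Set V)

def Break.inl : G.induce Dᶜ ↪g G.Break D where
  toEmbedding := .inl
  map_rel_iff' := .rfl

variable {G D}

lemma Break.snd_notMem (hD : G.IsIndepSet D) (p : {p : V × V // p.1 ∈ D ∧ G.Adj p.1 p.2}) :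
    p.1.2 ∉ D :=
  fun h => hD p.2.1 h (G.ne_of_adj p.2.2) p.2.2

lemma Break.neighborSet_inr (hD : G.IsIndepSet D) (p : {p : V × V // p.1 ∈ D ∧ G.Adj p.1 p.2}) :
    (G.Break D).neighborSet (.inr p) = {.inl ⟨p.1.2, snd_notMem hD p⟩} := by
  ext (x | q)
  · exact ⟨fun (h : p.1.2 = x) => congrArg Sum.inl (Subtype.ext h.symm),
      fun h => (Subtype.ext_iff.mp (Sum.inl.inj h)).symm⟩
  · exact ⟨fun h => (snd_notMem hD p (h.1 ▸ q.2.1)).elim, fun h => (Sum.inl_ne_inr h.symm).elim⟩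

lemma isTree_break_iff (hD : G.IsIndepSet D) : (G.Break D).IsTree ↔ (G.induce Dᶜ).IsTree := by
  refine ((Break.inl G D).isoInduceRange.isTree_iff.trans
    (isTree_induce_iff_of_neighborSet_eq_singleton ?_)).symm
  rintro (x | p) hv
  · exact (hv ⟨x, rfl⟩).elim
  · exact ⟨_, ⟨_, rfl⟩, Break.neighborSet_inr hD p⟩

end Break

end SimpleGraph

theorem exists_induced_spanning_tree_iff_exists_break_tree_general {V : Type*}
    (G : SimpleGraph V) (B U : Set V)
    (hpart : B ∪ U = Set.univ) (hdisj : Disjoint B U)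
    (hbip : ∀ ⦃a b⦄, G.Adj a b → (a ∈ B ∧ b ∈ U) ∨ (a ∈ U ∧ b ∈ B)) :
    (∃ S ⊆ B, (G.induce (U ∪ S)).IsTree) ↔ (∃ D ⊆ B, (G.Break D).IsTree) := by
  have hB : G.IsIndepSet B := fun a ha b hb _ hab =>
    (hbip hab).elim (fun h => Set.disjoint_left.mp hdisj hb h.2)
      (fun h => Set.disjoint_left.mp hdisj ha h.1)
  obtain rfl : U = Bᶜ := (IsCompl.compl_eq ⟨hdisj, codisjoint_iff.mpr hpart⟩).symm
  have key : ∀ D ⊆ B, (G.Break D).IsTree ↔ (G.induce (Bᶜ ∪ (B \ D))).IsTree := fun D hD => by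
    rw [Set.union_comm, ← Set.compl_sdiff, Set.sdiff_sdiff_cancel_left hD]
    exact SimpleGraph.isTree_break_iff (hB.mono hD)
  constructor
  · rintro ⟨S, hS, hT⟩
    refine ⟨B \ S, Set.sdiff_subset, (key _ Set.sdiff_subset).mpr ?_⟩
    rwa [Set.sdiff_sdiff_cancel_left hS]
  · rintro ⟨D, hD, hT⟩
    exact ⟨B \ D, Set.sdiff_subset, (key D hD).mp hT⟩

theorem exists_induced_spanning_tree_iff_exists_break_tree {V : Type*} [Fintype V]
    (G : SimpleGraph V) (B U : Set V)
    (hpart : B ∪ U = Set.univ) (hdisj : Disjoint B U)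
    (hbip : ∀ ⦃a b⦄, G.Adj a b → (a ∈ B ∧ b ∈ U) ∨ (a ∈ U ∧ b ∈ B))
    (hU : U.Nonempty) :
    (∃ S ⊆ B, (G.induce (U ∪ S)).IsTree) ↔ (∃ D ⊆ B, (G.Break D).IsTree) :=
  exists_induced_spanning_tree_iff_exists_break_tree_general G B U hpart hdisj hbip
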